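/- For any function f : E → [0,∞], (inf_{x∈E} f(x)) · (sup_{y∈E} f^Γ(y)) = 1, where the conventions ∞·0 = 0·∞ = 1 are used. Furthermore, if f is upper radial, then also (sup_{x∈E} f(x)) · (inf_{y∈E} f^Γ(y)) = 1. -/

import Mathlib

open Set
open scoped ENNReal RealInnerProductSpace

noncomputable section

variable {E : Type*} [NormedAddCommGroup E] [InnerProductSpace ℝ E] [FiniteDimensional ℝ E]

/-- The perspective function `f^p(y,v) = v·f(y/v)` (for `v > 0`). -/
def persp (f : E → ℝ≥0∞) (y : E) (v : ℝ) : ℝ≥0∞ := ENNReal.ofReal v * f (v⁻¹ • y)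

/-- The upper radial transformation `f^Γ(y) = sup{v > 0 : v·f(y/v) ≤ 1}` (`sup ∅ = 0`). -/
def radSup (f : E → ℝ≥0∞) (y : E) : ℝ≥0∞ :=
  ⨆ (v : ℝ) (_ : 0 < v) (_ : persp f y v ≤ 1), ENNReal.ofReal v

/-- `f` is upper radial: every `f^p(y,·)` is nondecreasing and upper semicontinuous on `ℝ₊₊`. -/
def UpperRadial (f : E → ℝ≥0∞) : Prop :=
  ∀ y : E, MonotoneOn (persp f y) (Ioi (0 : ℝ)) ∧
    UpperSemicontinuousOn (persp f y) (Ioi (0 : ℝ))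

/-- Multiplication on `[0,∞]` with the conventions `∞·0 = 0·∞ = 1`. -/
def mulConv (a b : ℝ≥0∞) : ℝ≥0∞ :=
  if (a = 0 ∧ b = ⊤) ∨ (a = ⊤ ∧ b = 0) then 1 else a * b

/-!
Since `f^p(v • x, v) = v · f(x)`, a level `v > 0` is admissible for `f^Γ` at the point `v • x`
exactly when `v · f(x) ≤ 1`; letting `x` range over `E` gives `sup f^Γ = (inf f)⁻¹`.
Every level below `(sup f)⁻¹` is admissible at every point, and when `f^p(y, ·)` is monotone every
level below `f^Γ(y)` is admissible at `y`; together these give `inf f^Γ = (sup f)⁻¹`.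
Both products are then of the form `a · a⁻¹`, which is `1` under the conventions
`0 · ∞ = ∞ · 0 = 1`.
-/

lemma mulConv_self_inv (a : ℝ≥0∞) : mulConv a a⁻¹ = 1 := by
  rcases eq_or_ne a 0 with rfl | h0
  · simp [mulConv]
  rcases eq_or_ne a ⊤ with rfl | htop
  · simp [mulConv]
  rw [mulConv, if_neg (by simp [h0, htop]), ENNReal.mul_inv_cancel h0 htop]

lemma ENNReal.le_of_forall_pos_ofReal_lt {a b : ℝ≥0∞}
    (h : ∀ v : ℝ, 0 < v → ENNReal.ofReal v < a → ENNReal.ofReal v ≤ b) : a ≤ b := by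
  refine le_of_forall_lt fun c hca => ?_
  obtain ⟨v, -, hcv, hva⟩ := ENNReal.lt_iff_exists_real_btwn.mp hca
  have hv : 0 < v := ENNReal.ofReal_pos.mp (hcv.trans_le' zero_le)
  exact hcv.trans_le (h v hv hva)

section

omit [FiniteDimensional ℝ E]

lemma persp_smul_self (f : E → ℝ≥0∞) {v : ℝ} (hv : v ≠ 0) (x : E) :
    persp f (v • x) v = ENNReal.ofReal v * f x := by
  rw [persp, inv_smul_smul₀ hv]

lemma ofReal_le_radSup (f : E → ℝ≥0∞) {y : E} {v : ℝ} (hv : 0 < v)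
    (h : persp f y v ≤ 1) :
    ENNReal.ofReal v ≤ radSup f y :=
  le_iSup_of_le v <| le_iSup_of_le hv <| le_iSup_of_le h le_rfl

lemma radSup_le_inv_iInf (f : E → ℝ≥0∞) (y : E) : radSup f y ≤ (⨅ x, f x)⁻¹ := by
  refine iSup_le fun v => iSup_le fun _ => iSup_le fun h => ?_
  rw [ENNReal.le_inv_iff_mul_le]
  calc ENNReal.ofReal v * ⨅ x, f x ≤ ENNReal.ofReal v * f (v⁻¹ • y) := by
        gcongr; exact iInf_le _ _
    _ ≤ 1 := h

lemma inv_iSup_le_radSup (f : E → ℝ≥0∞) (y : E) : (⨆ x, f x)⁻¹ ≤ radSup f y := by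
  refine ENNReal.le_of_forall_pos_ofReal_lt fun v hv hvM => ofReal_le_radSup f hv ?_
  calc persp f y v ≤ ENNReal.ofReal v * ⨆ x, f x := by rw [persp]; gcongr; exact le_iSup _ _
    _ ≤ 1 := ENNReal.le_inv_iff_mul_le.mp hvM.le

lemma persp_le_one_of_ofReal_lt_radSup (f : E → ℝ≥0∞) {y : E} {v : ℝ}
    (hmono : MonotoneOn (persp f y) (Ioi 0)) (hv : 0 < v) (h : ENNReal.ofReal v < radSup f y) :
    persp f y v ≤ 1 := by
  obtain ⟨w, hw⟩ := lt_iSup_iff.mp h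
  obtain ⟨hw0, hw⟩ := lt_iSup_iff.mp hw
  obtain ⟨hw1, hvw⟩ := lt_iSup_iff.mp hw
  have hvw : v ≤ w := ((ENNReal.ofReal_lt_ofReal_iff hw0).mp hvw).le
  exact (hmono hv hw0 hvw).trans hw1

theorem iSup_radSup (f : E → ℝ≥0∞) : ⨆ y, radSup f y = (⨅ x, f x)⁻¹ := by
  refine le_antisymm (iSup_le (radSup_le_inv_iInf f)) ?_
  rw [ENNReal.inv_iInf]
  refine iSup_le fun x => ENNReal.le_of_forall_pos_ofReal_lt fun v hv hvx => ?_
  have hadm : persp f (v • x) v ≤ 1 := by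
    rw [persp_smul_self f hv.ne']
    exact ENNReal.le_inv_iff_mul_le.mp hvx.le
  exact le_iSup_of_le (v • x) (ofReal_le_radSup f hv hadm)

theorem iInf_radSup (f : E → ℝ≥0∞) (hmono : ∀ y, MonotoneOn (persp f y) (Ioi 0)) :
    ⨅ y, radSup f y = (⨆ x, f x)⁻¹ := by
  refine le_antisymm ?_ (le_iInf (inv_iSup_le_radSup f))
  refine ENNReal.le_of_forall_pos_ofReal_lt fun v hv hvr => ?_
  rw [ENNReal.le_inv_iff_mul_le, ENNReal.mul_iSup]
  refine iSup_le fun x => ?_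
  rw [← persp_smul_self f hv.ne']
  exact persp_le_one_of_ofReal_lt_radSup f (hmono _) hv (hvr.trans_le (iInf_le _ _))

end

set_option linter.unusedSectionVars false in
/-- For any `f`, `(inf f)·(sup f^Γ) = 1`, and if `f` is upper radial then also
`(sup f)·(inf f^Γ) = 1` (with `∞·0 = 0·∞ = 1`). -/
theorem radial_optimal_values (f : E → ℝ≥0∞) :
    mulConv (⨅ x : E, f x) (⨆ y : E, radSup f y) = 1 ∧
    (UpperRadial f → mulConv (⨆ x : E, f x) (⨅ y : E, radSup f y) = 1) := by
  refine ⟨?_, fun hf => ?_⟩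
  · rw [iSup_radSup]
    exact mulConv_self_inv _
  · rw [iInf_radSup f fun y => (hf y).1]
    exact mulConv_self_inv _
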